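/- arXiv:2304.01132 — 2 statements merged into one kernel-verified Lean document; each statement's English description precedes it below -/
import Mathlib

section
/- For the Even-Integer Continued Fraction transformation T_ECF on [0,1] with E = [0,1/2] and φ_E the first return time to E: for every n ≥ 1 the level set A_n = {x ∈ E : φ_E(x) = n} equals ⋃_{r≥1} ( (n+1)/(2r(n+1)+n), n/(2rn+n−1) ) ∪ ⋃_{r≥2} ( n/(2rn−n+1), (n+1)/(2r(n+1)−n) ) up to sets of measure zero, and for every M ≥ 0 the super-level set {x ∈ E : φ_E(x) > M} equals ⋃_{j≥1} ( (M+1)/(2(j+1)(M+1)−M), (M+1)/(2j(M+1)+M) ) up to sets of measure zero. -/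
open MeasureTheory Filter Set Asymptotics

noncomputable section

namespace InfErg

variable {X : Type*} [MeasurableSpace X]

/-- The first return time `φ_E(x) = min {k ≥ 1 : T^k x ∈ E}`. -/
def returnTime (T : X → X) (E : Set X) (x : X) : ℕ :=
  sInf {k : ℕ | 1 ≤ k ∧ T^[k] x ∈ E}

/-- The hitting time `h_E(x) = min {k ≥ 0 : T^k x ∈ E}`. -/
def hitTime (T : X → X) (E : Set X) (x : X) : ℕ :=
  sInf {k : ℕ | T^[k] x ∈ E}

/-- The level set `A_n = {x ∈ E : φ_E(x) = n}`. -/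
def levelSet (T : X → X) (E : Set X) (n : ℕ) : Set X :=
  {x | x ∈ E ∧ returnTime T E x = n}

/-- The super-level set `A_{>n} = {x ∈ E : φ_E(x) > n}`. -/
def superLevelSet (T : X → X) (E : Set X) (n : ℕ) : Set X :=
  {x | x ∈ E ∧ n < returnTime T E x}

/-- The wandering rate `w_n(E) = ∑_{k=0}^{n-1} μ(A_{>k})`. -/
def wanderingRate (T : X → X) (E : Set X) (μ : Measure X) (n : ℕ) : ℝ :=
  ∑ k ∈ Finset.range n, (μ (superLevelSet T E k)).toReal

/-- `α(n) = n / w_n(E)`. -/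
def alphaSeq (T : X → X) (E : Set X) (μ : Measure X) (n : ℕ) : ℝ :=
  (n : ℝ) / wanderingRate T E μ n

/-- The induced map `T_E(x) = T^{φ_E(x)}(x)`. -/
def inducedMap (T : X → X) (E : Set X) (x : X) : X :=
  T^[returnTime T E x] x

/-- The Birkhoff sum `S_N g(x) = ∑_{n=1}^N g(T^{n-1} x)`. -/
def birkhoffSum (T : X → X) (g : X → ℝ) (N : ℕ) (x : X) : ℝ :=
  ∑ i ∈ Finset.range N, g (T^[i] x)

/-- `max_{1 ≤ k ≤ N} g(T^{k-1} x)`. -/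
def birkhoffMax (T : X → X) (g : X → ℝ) (N : ℕ) (x : X) : ℝ :=
  sSup ((fun i => g (T^[i] x)) '' {i : ℕ | i < N})

/-- The trimmed Birkhoff sum `S^r_N g(x)`: the Birkhoff sum with the `r` largest
summands among `g(x), g(Tx), …, g(T^{N-1}x)` removed; equivalently, the smallest
possible sum of `N - r` of these summands. -/
def trimmedBirkhoffSum (T : X → X) (g : X → ℝ) (r N : ℕ) (x : X) : ℝ :=
  sInf {s : ℝ | ∃ A : Finset ℕ, A ⊆ Finset.range N ∧ A.card = N - r ∧
    s = ∑ i ∈ A, g (T^[i] x)}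

/-- The trimmed sum `S_N^r(ω)` of a sequence of random variables: the sum of
`Y_1(ω), …, Y_N(ω)` with the `r` largest entries removed; equivalently, the
smallest possible sum of `N - r` of these entries. -/
def trimmedSumSeq {Ω : Type*} (Y : ℕ → Ω → ℝ) (r N : ℕ) (ω : Ω) : ℝ :=
  sInf {s : ℝ | ∃ A : Finset ℕ, A ⊆ Finset.range N ∧ A.card = N - r ∧
    s = ∑ i ∈ A, Y i ω}

/-- The `r`-th maximum `M^r_N(ω)` among `Y_1(ω), …, Y_N(ω)`. -/
def rthMaxSeq {Ω : Type*} (Y : ℕ → Ω → ℝ) (r N : ℕ) (ω : Ω) : ℝ :=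
  sSup {m : ℝ | ∃ A : Finset ℕ, A ⊆ Finset.range N ∧ A.card = r ∧ ∀ i ∈ A, m ≤ Y i ω}

/-- `m(N,E,x) = 1 + max {k ≥ 1 : ∃ ℓ ∈ {1,…,N+1}, T^{ℓ+j} x ∉ E ∀ j = 0,…,k-1}`,
the longest excursion out of `E` beginning in the first `N` steps. -/
def mExc (T : X → X) (E : Set X) (N : ℕ) (x : X) : ℕ :=
  1 + sSup {k : ℕ | 1 ≤ k ∧ ∃ l : ℕ, 1 ≤ l ∧ l ≤ N + 1 ∧ ∀ j < k, T^[l + j] x ∉ E}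

/-- `f : ℕ → ℝ` is slowly varying: `f(⌊dN⌋)/f(N) → 1` for all `d > 0`. -/
def SlowlyVarying (f : ℕ → ℝ) : Prop :=
  ∀ d : ℝ, 0 < d → Tendsto (fun N : ℕ => f ⌊d * (N : ℝ)⌋₊ / f N) atTop (nhds 1)

/-- `b` is an asymptotic inverse of `a`. -/
def IsAsymptoticInverse (a b : ℝ → ℝ) : Prop :=
  Tendsto (fun y => a (b y) / y) atTop (nhds 1) ∧
  Tendsto (fun y => b (a y) / y) atTop (nhds 1)

/-- `b` is an asymptotic inverse of `a` (sequence version). -/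
def IsAsymptoticInverseSeq (a b : ℕ → ℝ) : Prop :=
  Tendsto (fun n : ℕ => a ⌊b n⌋₊ / (n : ℝ)) atTop (nhds 1) ∧
  Tendsto (fun n : ℕ => b ⌊a n⌋₊ / (n : ℝ)) atTop (nhds 1)

/-- The σ-field `F_h^k` generated by the random variables `Y_m`, `m ∈ s`. -/
def sigmaGen {Ω : Type*} (Y : ℕ → Ω → ℝ) (s : Set ℕ) : MeasurableSpace Ω :=
  ⨆ m ∈ s, MeasurableSpace.comap (Y m) (inferInstance : MeasurableSpace ℝ)

/-- The sequence `(Y_n)` is ψ-mixing with mixing coefficients `ψ`: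
`|P(B ∩ C)/(P(B)P(C)) - 1| ≤ ψ(n)` for all `B ∈ F_0^j`, `C ∈ F_{j+n}^∞` of
positive measure. -/
def PsiMixingWith {Ω : Type*} [MeasurableSpace Ω] (P : Measure Ω) (Y : ℕ → Ω → ℝ)
    (ψ : ℕ → ℝ) : Prop :=
  ∀ n j : ℕ, ∀ B C : Set Ω,
    MeasurableSet[sigmaGen Y (Set.Icc 0 j)] B →
    MeasurableSet[sigmaGen Y (Set.Ici (j + n))] C →
    0 < P B → 0 < P C →
    |(P (B ∩ C)).toReal / ((P B).toReal * (P C).toReal) - 1| ≤ ψ n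

/-- `Pt` is the partition `P_E` of `E` induced by `T_E`: a partition of `E`
(mod μ) into measurable sets, each of which is mapped onto `E` by `T_E` a.s.,
and which is the finest such partition. -/
structure IsInducedPartition (T : X → X) (E : Set X) (μ : Measure X)
    (Pt : Set (Set X)) : Prop where
  subset_base : ∀ p ∈ Pt, p ⊆ E
  measurableSet : ∀ p ∈ Pt, MeasurableSet p
  pairwiseDisjoint : Pt.PairwiseDisjoint id
  cover : μ (E \ ⋃₀ Pt) = 0
  onto : ∀ p ∈ Pt, μ (E \ inducedMap T E '' p) = 0
  finest : ∀ Qt : Set (Set X), (∀ q ∈ Qt, q ⊆ E) → (∀ q ∈ Qt, MeasurableSet q) →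
    Qt.PairwiseDisjoint id → μ (E \ ⋃₀ Qt) = 0 →
    (∀ q ∈ Qt, μ (E \ inducedMap T E '' q) = 0) →
    ∀ p ∈ Pt, ∃ q ∈ Qt, μ (p \ q) = 0

/-- `f` is (piecewise) constant on each element of the partition `Pt`. -/
def ConstantOn (Pt : Set (Set X)) (f : X → ℝ) : Prop :=
  ∀ p ∈ Pt, ∀ x ∈ p, ∀ y ∈ p, f x = f y

/-- `E` induces rapid ψ-mixing (relative to the induced partition `Pt = P_E`):
`T_E(A_n) = E` a.s. for all `n ≥ 1`, and for every sequence `(φ_n)` of functions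
piecewise constant on `Pt`, the sequence `(φ_n ∘ T_E^{n-1})` is ψ-mixing with
coefficients `ψ(n)` satisfying `∑ ψ(n)/n < ∞`. -/
def InducesRapidPsiMixing (T : X → X) (E : Set X) (μ : Measure X)
    (Pt : Set (Set X)) : Prop :=
  (∀ n : ℕ, 1 ≤ n → μ (E \ inducedMap T E '' levelSet T E n) = 0) ∧
  ∀ φ : ℕ → X → ℝ, (∀ n, ConstantOn Pt (φ n)) →
    ∃ ψ : ℕ → ℝ, (∀ n, 0 ≤ ψ n) ∧ Tendsto ψ atTop (nhds 0) ∧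
      Summable (fun n : ℕ => ψ n / (n : ℝ)) ∧
      PsiMixingWith (μ.restrict E) (fun n x => φ n ((inducedMap T E)^[n] x)) ψ

/-- The backward continued fraction map `T_BCF(x) = {1/(1-x)}`. -/
def Tbcf (x : ℝ) : ℝ := Int.fract (1 / (1 - x))

/-- `E = [1/2, 1]` for the backward continued fraction map. -/
def Ebcf : Set ℝ := Set.Icc (1/2 : ℝ) 1

/-- The `T_BCF`-invariant measure with density `1/(x log 2)` on `[0,1]`. -/
def muBCF : Measure ℝ :=
  (volume.restrict (Set.Icc (0:ℝ) 1)).withDensity fun x =>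
    ENNReal.ofReal (1 / (x * Real.log 2))

/-- The observable `g(x) = ⌊1/(1-x)⌋ + 1` for the backward continued fractions. -/
def gBCF (x : ℝ) : ℝ := (⌊1 / (1 - x)⌋ : ℝ) + 1

open Classical in
/-- The even-integer continued fraction map: `T_ECF(x) = 1 - {1/x}` on
`⋃_{k ≥ 1} (1/(2k), 1/(2k-1))` and `T_ECF(x) = {1/x}` otherwise. -/
def Tecf (x : ℝ) : ℝ :=
  if x ∈ ⋃ k : ℕ, Set.Ioo (1 / (2 * (k : ℝ) + 2)) (1 / (2 * (k : ℝ) + 1))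
  then 1 - Int.fract (1 / x) else Int.fract (1 / x)

/-- `E = [0, 1/2]` for the even-integer continued fraction map. -/
def Eecf : Set ℝ := Set.Icc (0:ℝ) (1/2)

/-- The `T_ECF`-invariant measure with density `1/((1-x²) log √3)` on `[0,1]`. -/
def muECF : Measure ℝ :=
  (volume.restrict (Set.Icc (0:ℝ) 1)).withDensity fun x =>
    ENNReal.ofReal (1 / ((1 - x ^ 2) * Real.log (Real.sqrt 3)))

/-- The observable `g(x) = 2⌊1/(2x) + 1/2⌋` for the even-integer continued fractions. -/
def gECF (x : ℝ) : ℝ := 2 * (⌊1 / (2 * x) + 1 / 2⌋ : ℝ)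

/-- The observable `g̃(x) = ⌊1/x⌋` for the even-integer continued fractions. -/
def gtECF (x : ℝ) : ℝ := (⌊1 / x⌋ : ℝ)

/-- The candidate expression for the level set `A_n` of the first return time
of `T_ECF` to `E = [0,1/2]`. -/
def ecfAn (n : ℕ) : Set ℝ :=
  (⋃ r : ℕ, ⋃ (_ : 1 ≤ r),
    Set.Ioo (((n : ℝ) + 1) / (2 * (r : ℝ) * ((n : ℝ) + 1) + (n : ℝ)))
      ((n : ℝ) / (2 * (r : ℝ) * (n : ℝ) + (n : ℝ) - 1))) ∪
  (⋃ r : ℕ, ⋃ (_ : 2 ≤ r),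
    Set.Ioo ((n : ℝ) / (2 * (r : ℝ) * (n : ℝ) - (n : ℝ) + 1))
      (((n : ℝ) + 1) / (2 * (r : ℝ) * ((n : ℝ) + 1) - (n : ℝ))))

/-- The candidate expression for the super-level set `A_{>M}` for `T_ECF`. -/
def ecfAgt (M : ℕ) : Set ℝ :=
  ⋃ j : ℕ, ⋃ (_ : 1 ≤ j),
    Set.Ioo (((M : ℝ) + 1) / (2 * ((j : ℝ) + 1) * ((M : ℝ) + 1) - (M : ℝ)))
      (((M : ℝ) + 1) / (2 * (j : ℝ) * ((M : ℝ) + 1) + (M : ℝ)))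

lemma irr_floor_lt {u : ℝ} (hu : Irrational u) : (⌊u⌋ : ℝ) < u :=
  lt_of_le_of_ne (Int.floor_le u) (fun h => (hu ⟨⌊u⌋, by exact_mod_cast h⟩).elim)

lemma lt_inv'' {x c : ℝ} (hx : 0 < x) (hc : 0 < c) : x < 1/c ↔ c < 1/x := by
  rw [lt_div_iff₀ hc, lt_div_iff₀ hx, mul_comm]

lemma inv_lt'' {x c : ℝ} (hx : 0 < x) (hc : 0 < c) : 1/c < x ↔ 1/x < c := by
  rw [div_lt_iff₀ hc, div_lt_iff₀ hx, mul_comm]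

lemma mem_U_iff {x : ℝ} (hx : Irrational x) (h0 : 0 < x) (h1 : x < 1) :
    (x ∈ ⋃ k : ℕ, Set.Ioo (1 / (2 * (k : ℝ) + 2)) (1 / (2 * (k : ℝ) + 1))) ↔ Odd ⌊1/x⌋ := by
  have hux : Irrational (1/x) := by simpa using hx.inv
  have hu1 : 1 < 1/x := by rw [lt_div_iff₀ h0]; linarith
  have hfl : (⌊1/x⌋:ℝ) < 1/x := irr_floor_lt hux
  have hfu : 1/x < (⌊1/x⌋:ℝ) + 1 := Int.lt_floor_add_one _
  constructor
  · rintro hmem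
    simp only [Set.mem_iUnion, Set.mem_Ioo] at hmem
    obtain ⟨k, hk1, hk2⟩ := hmem
    have hd1 : (0:ℝ) < 2*(k:ℝ)+1 := by positivity
    have hd2 : (0:ℝ) < 2*(k:ℝ)+2 := by positivity
    have h1' : 2*(k:ℝ)+1 < 1/x := (lt_inv'' h0 hd1).1 hk2
    have h2' : 1/x < 2*(k:ℝ)+2 := (inv_lt'' h0 hd2).1 hk1
    have : ⌊1/x⌋ = 2*(k:ℤ)+1 :=
      Int.floor_eq_iff.2 ⟨by push_cast; linarith, by push_cast; linarith⟩
    rw [this]; exact ⟨k, by ring⟩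
  · rintro ⟨k, hk⟩
    have hk0 : 0 ≤ k := by
      have : (1:ℤ) ≤ ⌊1/x⌋ := Int.le_floor.2 (by exact_mod_cast hu1.le)
      omega
    have hc : (⌊1/x⌋:ℝ) = 2*(k:ℝ)+1 := by rw [hk]; push_cast; ring
    simp only [Set.mem_iUnion, Set.mem_Ioo]
    refine ⟨k.toNat, ?_, ?_⟩
    · have hkk : (k.toNat : ℝ) = (k:ℝ) := by exact_mod_cast Int.toNat_of_nonneg hk0
      rw [hkk, inv_lt'' h0 (by positivity)]
      linarith
    · have hkk : (k.toNat : ℝ) = (k:ℝ) := by exact_mod_cast Int.toNat_of_nonneg hk0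
      rw [hkk, lt_inv'' h0 (by positivity)]
      linarith

lemma Tecf_formula {x : ℝ} (hx : Irrational x) (h0 : 0 < x) (h1 : x < 1) :
    Tecf x = if Odd ⌊1/x⌋ then (⌊1/x⌋:ℝ) + 1 - 1/x else 1/x - (⌊1/x⌋:ℝ) := by
  rw [Tecf]
  by_cases h : Odd ⌊1/x⌋
  · rw [if_pos ((mem_U_iff hx h0 h1).2 h), if_pos h, Int.fract]; ring
  · rw [if_neg (fun hm => h ((mem_U_iff hx h0 h1).1 hm)), if_neg h, Int.fract]

def Iv (n : ℕ) : Set ℝ := Set.Ioo ((n:ℝ)/((n:ℝ)+1)) (((n:ℝ)+1)/((n:ℝ)+2))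

lemma Tecf_irrational {x : ℝ} (hx : Irrational x) (h0 : 0 < x) (h1 : x < 1) :
    Irrational (Tecf x) ∧ 0 < Tecf x ∧ Tecf x < 1 := by
  have hux : Irrational (1/x) := by simpa using hx.inv
  have hfl : (⌊1/x⌋:ℝ) < 1/x := irr_floor_lt hux
  have hfu : 1/x < (⌊1/x⌋:ℝ) + 1 := Int.lt_floor_add_one _
  rw [Tecf_formula hx h0 h1]
  by_cases h : Odd ⌊1/x⌋
  · rw [if_pos h]
    refine ⟨?_, by linarith, by linarith⟩
    have : Irrational ((⌊1/x⌋ + 1 : ℤ) - 1/x) := hux.intCast_sub _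
    simpa using this
  · rw [if_neg h]
    exact ⟨hux.sub_intCast _, by linarith, by linarith⟩

lemma Iv_exists {y : ℝ} (hy : Irrational y) (h0 : 0 < y) (h1 : y < 1) :
    ∃ n : ℕ, y ∈ Iv n := by
  have h1y : Irrational (1 - y) := by
    have : Irrational ((1:ℤ) - y) := hy.intCast_sub _
    simpa using this
  have h1y0 : 0 < 1 - y := by linarith
  have hu : Irrational (1/(1-y)) := by simpa using h1y.inv
  set u := 1/(1-y) with hud
  have hu1 : 1 < u := by rw [hud, lt_div_iff₀ h1y0]; linarith
  have hfl : (⌊u⌋:ℝ) < u := irr_floor_lt hu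
  have hfu : u < (⌊u⌋:ℝ) + 1 := Int.lt_floor_add_one _
  have hm1 : (1:ℤ) ≤ ⌊u⌋ := Int.le_floor.2 (by exact_mod_cast hu1.le)
  have hm1R : (1:ℝ) ≤ (⌊u⌋:ℝ) := by exact_mod_cast hm1
  have hfl' : (⌊u⌋:ℝ) * (1 - y) < 1 := by
    rw [hud, lt_div_iff₀ h1y0] at hfl; linarith
  have hfu' : 1 < ((⌊u⌋:ℝ) + 1) * (1 - y) := by
    rw [hud, div_lt_iff₀ h1y0] at hfu; linarith
  refine ⟨(⌊u⌋ - 1).toNat, ?_⟩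
  have hcz : (((⌊u⌋ - 1).toNat : ℤ)) = ⌊u⌋ - 1 := Int.toNat_of_nonneg (by omega)
  have hc : ((⌊u⌋ - 1).toNat : ℝ) = (⌊u⌋:ℝ) - 1 := by
    exact_mod_cast congrArg (Int.cast : ℤ → ℝ) hcz
  constructor
  · rw [hc, div_lt_iff₀ (by linarith : (0:ℝ) < (⌊u⌋:ℝ) - 1 + 1)]
    nlinarith
  · rw [hc, lt_div_iff₀ (by linarith : (0:ℝ) < (⌊u⌋:ℝ) - 1 + 2)]
    nlinarith

lemma Iv_step {y : ℝ} {n : ℕ} (hy : Irrational y) (hmem : y ∈ Iv (n+1)) :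
    Irrational (Tecf y) ∧ Tecf y ∈ Iv n := by
  obtain ⟨hl, hr⟩ := hmem
  push_cast at hl hr
  have hl' : (n:ℝ)+1 < y*((n:ℝ)+2) := by
    rw [div_lt_iff₀ (by positivity : (0:ℝ) < (n:ℝ)+1+1)] at hl; nlinarith
  have hr' : y*((n:ℝ)+3) < (n:ℝ)+2 := by
    rw [lt_div_iff₀ (by positivity : (0:ℝ) < (n:ℝ)+1+2)] at hr; nlinarith
  have hn0 : (0:ℝ) ≤ (n:ℝ) := Nat.cast_nonneg n
  have half : (1/2 : ℝ) < y := by nlinarith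
  have h1 : y < 1 := by nlinarith
  have h0 : 0 < y := by linarith
  have hv0 : 0 < 1/y := by positivity
  have hvy : (1/y) * y = 1 := by field_simp
  have hu1 : 1 < 1/y := by rw [lt_div_iff₀ h0]; linarith
  have hu2 : 1/y < 2 := by rw [div_lt_iff₀ h0]; linarith
  have hflr : ⌊1/y⌋ = 1 := by
    apply Int.floor_eq_iff.2
    constructor
    · exact_mod_cast hu1.le
    · push_cast; linarith
  have hT : Tecf y = 2 - 1/y := by
    rw [Tecf_formula hy h0 h1, if_pos (by rw [hflr]; exact ⟨0, by ring⟩), hflr]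
    norm_num
  refine ⟨?_, ?_, ?_⟩
  · rw [hT]
    have : Irrational ((2:ℤ) - 1/y) := (by simpa using hy.inv : Irrational (1/y)).intCast_sub _
    simpa using this
  · rw [hT]
    have key : (1/y) * ((n:ℝ)+1) < (1/y) * (y*((n:ℝ)+2)) := by
      exact mul_lt_mul_of_pos_left hl' hv0
    rw [div_lt_iff₀ (by positivity : (0:ℝ) < (n:ℝ)+1)]
    nlinarith [key, hvy]
  · rw [hT]
    have key : (1/y) * (y*((n:ℝ)+3)) < (1/y) * ((n:ℝ)+2) := by
      exact mul_lt_mul_of_pos_left hr' hv0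
    rw [lt_div_iff₀ (by positivity : (0:ℝ) < (n:ℝ)+2)]
    nlinarith [key, hvy]

lemma Iv_orbit {n : ℕ} : ∀ {y : ℝ}, Irrational y → y ∈ Iv n →
    (∀ j < n, Tecf^[j] y ∉ Eecf) ∧ Tecf^[n] y ∈ Eecf := by
  induction n with
  | zero =>
    intro y hy hmem
    obtain ⟨hl, hr⟩ := hmem
    push_cast at hl hr
    refine ⟨by omega, ?_⟩
    simp only [Function.iterate_zero, id_eq]
    constructor
    · simp only [zero_div] at hl
      norm_num at hl
      linarith
    · have : y < 1/2 := by
        have := hr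
        norm_num at this
        linarith
      linarith
  | succ n ih =>
    intro y hy hmem
    obtain ⟨hy', hmem'⟩ := Iv_step hy hmem
    obtain ⟨ih1, ih2⟩ := ih hy' hmem'
    refine ⟨?_, ?_⟩
    · intro j hj
      match j with
      | 0 =>
        simp only [Function.iterate_zero, id_eq]
        intro hE
        obtain ⟨hl, _⟩ := hmem
        push_cast at hl
        have hl' : (n:ℝ)+1 < y*((n:ℝ)+2) := by
          rw [div_lt_iff₀ (by positivity : (0:ℝ) < (n:ℝ)+1+1)] at hl; nlinarith
        have hn0 : (0:ℝ) ≤ (n:ℝ) := Nat.cast_nonneg n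
        have : (1/2:ℝ) < y := by nlinarith
        exact absurd hE.2 (by linarith)
      | (j+1) =>
        rw [Function.iterate_succ_apply]
        exact ih1 j (by omega)
    · rw [Function.iterate_succ_apply]
      exact ih2

lemma returnTime_eq {x : ℝ} {n : ℕ} (hTx : Tecf x ∈ Iv n)
    (hTirr : Irrational (Tecf x)) : returnTime Tecf Eecf x = n + 1 := by
  obtain ⟨h1, h2⟩ := Iv_orbit hTirr hTx
  have hmem : n + 1 ∈ {k : ℕ | 1 ≤ k ∧ Tecf^[k] x ∈ Eecf} := by
    refine ⟨by omega, ?_⟩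
    rw [Function.iterate_succ_apply]
    exact h2
  apply le_antisymm (Nat.sInf_le hmem)
  by_contra hlt
  push_neg at hlt
  have hin := Nat.sInf_mem ⟨n+1, hmem⟩
  obtain ⟨hk1, hk2⟩ := hin
  set k := sInf {k : ℕ | 1 ≤ k ∧ Tecf^[k] x ∈ Eecf}
  obtain ⟨j, hj⟩ : ∃ j, k = j + 1 := ⟨k - 1, by omega⟩
  rw [hj, Function.iterate_succ_apply] at hk2
  exact h1 j (by omega) hk2

lemma key_equiv {x : ℝ} (hx : Irrational x) (h0 : 0 < x) (h2 : x < 1/2) :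
    ∃ n : ℕ, Tecf x ∈ Iv n ∧ returnTime Tecf Eecf x = n + 1 := by
  have h1 : x < 1 := by linarith
  obtain ⟨hTirr, hT0, hT1⟩ := Tecf_irrational hx h0 h1
  obtain ⟨n, hn⟩ := Iv_exists hTirr hT0 hT1
  exact ⟨n, hn, returnTime_eq hn hTirr⟩

lemma Iv_disjoint {y : ℝ} {n m : ℕ} (hn : y ∈ Iv n) (hm : y ∈ Iv m) : n = m := by
  by_contra hne
  wlog h : n < m generalizing n m
  · exact this hm hn (Ne.symm hne) (by omega)
  obtain ⟨_, hn2⟩ := hn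
  obtain ⟨hm1, _⟩ := hm
  have h1 : ((n:ℝ)+1)/((n:ℝ)+2) ≤ (m:ℝ)/((m:ℝ)+1) := by
    rw [div_le_div_iff₀ (by positivity) (by positivity)]
    have : (n:ℝ) + 1 ≤ (m:ℝ) := by exact_mod_cast h
    nlinarith
  linarith

lemma levelSet_iff {x : ℝ} (hx : Irrational x) (h0 : 0 < x) (h2 : x < 1/2) (n : ℕ) :
    (x ∈ levelSet Tecf Eecf (n+1)) ↔ Tecf x ∈ Iv n := by
  obtain ⟨m, hm, hrt⟩ := key_equiv hx h0 h2
  constructor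
  · rintro ⟨-, hr⟩
    rw [hrt] at hr
    have : m = n := by omega
    rwa [this] at hm
  · intro hmem
    have : n = m := Iv_disjoint hmem hm
    exact ⟨⟨le_of_lt h0, by linarith⟩, by rw [hrt, this]⟩

lemma superLevelSet_iff {x : ℝ} (hx : Irrational x) (h0 : 0 < x) (h2 : x < 1/2) (M : ℕ) :
    (x ∈ superLevelSet Tecf Eecf M) ↔ (M:ℝ)/((M:ℝ)+1) < Tecf x := by
  obtain ⟨m, hm, hrt⟩ := key_equiv hx h0 h2
  obtain ⟨hm1, hm2⟩ := hm
  constructor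
  · rintro ⟨-, hr⟩
    rw [hrt] at hr
    have hMm : M ≤ m := by omega
    have : (M:ℝ)/((M:ℝ)+1) ≤ (m:ℝ)/((m:ℝ)+1) := by
      rw [div_le_div_iff₀ (by positivity) (by positivity)]
      have : (M:ℝ) ≤ (m:ℝ) := by exact_mod_cast hMm
      nlinarith
    linarith
  · intro hlt
    refine ⟨⟨le_of_lt h0, by linarith⟩, ?_⟩
    rw [hrt]
    have hMm : M < m + 1 := by
      by_contra hc
      push_neg at hc
      have hmM : m + 1 ≤ M := hc
      have : (m:ℝ)+1 ≤ (M:ℝ) := by exact_mod_cast hmM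
      have hle : ((m:ℝ)+1)/((m:ℝ)+2) ≤ (M:ℝ)/((M:ℝ)+1) := by
        rw [div_le_div_iff₀ (by positivity) (by positivity)]
        nlinarith
      linarith
    omega

lemma div_lt_inv_iff' {a b u : ℝ} (hb : 0 < b) (hu : 0 < u) : a/b < 1/u ↔ a*u < b := by
  rw [div_lt_div_iff₀ hb hu, one_mul]

lemma inv_lt_div_iff' {a b u : ℝ} (hb : 0 < b) (hu : 0 < u) : 1/u < a/b ↔ b < a*u := by
  rw [div_lt_div_iff₀ hu hb, one_mul]

set_option maxHeartbeats 1000000 in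
lemma ecfAn_iff {x : ℝ} (hx : Irrational x) (h0 : 0 < x) (h2 : x < 1/2) (n : ℕ) :
    (x ∈ ecfAn (n+1)) ↔ Tecf x ∈ Iv n := by
  have h1 : x < 1 := by linarith
  set u := 1/x with hud
  have hu0 : 0 < u := by positivity
  have hux : 1/u = x := one_div_one_div x
  have hu2 : 2 < u := by rw [hud, lt_div_iff₀ h0]; linarith
  have huirr : Irrational u := by rw [hud]; simpa using hx.inv
  set m := ⌊u⌋ with hmd
  have hml : (m:ℝ) < u := irr_floor_lt huirr
  have hmu : u < (m:ℝ) + 1 := Int.lt_floor_add_one u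
  have hm2 : (2:ℤ) ≤ m := Int.le_floor.2 (by exact_mod_cast hu2.le)
  have hm2R : (2:ℝ) ≤ (m:ℝ) := by exact_mod_cast hm2
  have hn0 : (0:ℝ) ≤ (n:ℝ) := Nat.cast_nonneg n
  have hTf : Tecf x = if Odd m then (m:ℝ) + 1 - u else u - (m:ℝ) := Tecf_formula hx h0 h1
  constructor
  · intro hmem
    simp only [ecfAn, Set.mem_union, Set.mem_iUnion, Set.mem_Ioo] at hmem
    rcases hmem with ⟨r, hr1, hl, hr⟩ | ⟨r, hr2, hl, hr⟩
    · -- even branch, m = 2r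
      have hrR : (1:ℝ) ≤ (r:ℝ) := by exact_mod_cast hr1
      push_cast at hl hr
      have hb1 : (0:ℝ) < 2*(r:ℝ)*((n:ℝ)+1+1)+((n:ℝ)+1) := by nlinarith
      have hb2 : (0:ℝ) < 2*(r:ℝ)*((n:ℝ)+1)+((n:ℝ)+1)-1 := by nlinarith
      rw [← hux] at hl hr
      have P1 : ((n:ℝ)+1+1)*u < 2*(r:ℝ)*((n:ℝ)+1+1)+((n:ℝ)+1) := (div_lt_inv_iff' hb1 hu0).1 hl
      have P2 : 2*(r:ℝ)*((n:ℝ)+1)+((n:ℝ)+1)-1 < ((n:ℝ)+1)*u := (inv_lt_div_iff' hb2 hu0).1 hr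
      have hflr : m = 2*(r:ℤ) := by
        rw [hmd]
        apply Int.floor_eq_iff.2
        constructor
        · push_cast; nlinarith
        · push_cast; nlinarith
      have hodd : ¬ Odd m := by rw [hflr]; simp [Int.not_odd_iff_even.symm.symm, Int.even_mul]
      rw [hTf, if_neg hodd, hflr]
      push_cast
      constructor
      · rw [div_lt_iff₀ (by positivity : (0:ℝ) < (n:ℝ)+1)]; nlinarith
      · rw [lt_div_iff₀ (by positivity : (0:ℝ) < (n:ℝ)+2)]; nlinarith
    · -- odd branch, m = 2r - 1
      have hrR : (2:ℝ) ≤ (r:ℝ) := by exact_mod_cast hr2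
      push_cast at hl hr
      have hb1 : (0:ℝ) < 2*(r:ℝ)*((n:ℝ)+1)-((n:ℝ)+1)+1 := by nlinarith
      have hb2 : (0:ℝ) < 2*(r:ℝ)*((n:ℝ)+1+1)-((n:ℝ)+1) := by nlinarith
      rw [← hux] at hl hr
      have P1 : ((n:ℝ)+1)*u < 2*(r:ℝ)*((n:ℝ)+1)-((n:ℝ)+1)+1 := (div_lt_inv_iff' hb1 hu0).1 hl
      have P2 : 2*(r:ℝ)*((n:ℝ)+1+1)-((n:ℝ)+1) < ((n:ℝ)+1+1)*u := (inv_lt_div_iff' hb2 hu0).1 hr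
      have hub : u < 2*(r:ℝ) := by nlinarith [P1, hn0]
      have hlb : 2*(r:ℝ) - 1 < u := by nlinarith [P2, hn0]
      have hflr : m = 2*(r:ℤ) - 1 := by
        rw [hmd]
        apply Int.floor_eq_iff.2
        constructor
        · push_cast; linarith
        · push_cast; linarith
      have hodd : Odd m := by rw [hflr]; exact ⟨(r:ℤ)-1, by ring⟩
      rw [hTf, if_pos hodd, hflr]
      push_cast
      constructor
      · rw [div_lt_iff₀ (by positivity : (0:ℝ) < (n:ℝ)+1)]; nlinarith
      · rw [lt_div_iff₀ (by positivity : (0:ℝ) < (n:ℝ)+2)]; nlinarith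
  · intro hmem
    obtain ⟨hIl, hIr⟩ := hmem
    have hIl' : (n:ℝ) < Tecf x * ((n:ℝ)+1) := by
      rw [div_lt_iff₀ (by positivity : (0:ℝ) < (n:ℝ)+1)] at hIl; linarith
    have hIr' : Tecf x * ((n:ℝ)+2) < (n:ℝ)+1 := by
      rw [lt_div_iff₀ (by positivity : (0:ℝ) < (n:ℝ)+2)] at hIr; linarith
    rcases Int.even_or_odd m with ⟨t, ht⟩ | ⟨t, ht⟩
    · -- m = t + t, Tecf x = u - m
      have hodd : ¬ Odd m := Int.not_odd_iff_even.symm.1 ⟨t, ht⟩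
      rw [hTf, if_neg hodd] at hIl' hIr'
      have ht1 : (1:ℤ) ≤ t := by omega
      have htR : ((t.toNat : ℕ):ℝ) = (t:ℝ) := by exact_mod_cast Int.toNat_of_nonneg (by omega)
      have hmR : (m:ℝ) = 2*(t:ℝ) := by rw [ht]; push_cast; ring
      rw [hmR] at hIl' hIr' hml hmu
      simp only [ecfAn, Set.mem_union, Set.mem_iUnion, Set.mem_Ioo]
      left
      refine ⟨t.toNat, by omega, ?_, ?_⟩
      · push_cast [htR]
        rw [← hux]
        rw [div_lt_inv_iff' (by nlinarith [show (1:ℝ) ≤ (t:ℝ) from by exact_mod_cast ht1]) hu0]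
        nlinarith
      · push_cast [htR]
        rw [← hux]
        rw [inv_lt_div_iff' (by nlinarith [show (1:ℝ) ≤ (t:ℝ) from by exact_mod_cast ht1]) hu0]
        nlinarith
    · -- m = 2t+1, Tecf x = m + 1 - u = 2t+2-u
      have hodd : Odd m := ⟨t, ht⟩
      rw [hTf, if_pos hodd] at hIl' hIr'
      have ht1 : (1:ℤ) ≤ t := by omega
      have htR : ((t.toNat : ℕ):ℝ) = (t:ℝ) := by exact_mod_cast Int.toNat_of_nonneg (by omega)
      have htR2 : (((t.toNat+1) : ℕ):ℝ) = (t:ℝ)+1 := by push_cast; rw [htR]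
      have hmR : (m:ℝ) = 2*(t:ℝ)+1 := by rw [ht]; push_cast; ring
      rw [hmR] at hIl' hIr' hml hmu
      simp only [ecfAn, Set.mem_union, Set.mem_iUnion, Set.mem_Ioo]
      right
      have htR1 : (1:ℝ) ≤ (t:ℝ) := by exact_mod_cast ht1
      refine ⟨t.toNat+1, by omega, ?_, ?_⟩
      · push_cast [htR]
        rw [← hux]
        rw [div_lt_inv_iff' (by nlinarith) hu0]
        nlinarith
      · push_cast [htR]
        rw [← hux]
        rw [inv_lt_div_iff' (by nlinarith) hu0]
        nlinarith

set_option maxHeartbeats 1000000 in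
lemma ecfAgt_iff {x : ℝ} (hx : Irrational x) (h0 : 0 < x) (h2 : x < 1/2) (M : ℕ) :
    (x ∈ ecfAgt M) ↔ (M:ℝ)/((M:ℝ)+1) < Tecf x := by
  have h1 : x < 1 := by linarith
  set u := 1/x with hud
  have hu0 : 0 < u := by positivity
  have hux : 1/u = x := one_div_one_div x
  have hu2 : 2 < u := by rw [hud, lt_div_iff₀ h0]; linarith
  have huirr : Irrational u := by rw [hud]; simpa using hx.inv
  set m := ⌊u⌋ with hmd
  have hml : (m:ℝ) < u := irr_floor_lt huirr
  have hmu : u < (m:ℝ) + 1 := Int.lt_floor_add_one u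
  have hm2 : (2:ℤ) ≤ m := Int.le_floor.2 (by exact_mod_cast hu2.le)
  have hm2R : (2:ℝ) ≤ (m:ℝ) := by exact_mod_cast hm2
  have hM0 : (0:ℝ) ≤ (M:ℝ) := Nat.cast_nonneg M
  have hM1 : (0:ℝ) < (M:ℝ)+1 := by linarith
  have hTf : Tecf x = if Odd m then (m:ℝ) + 1 - u else u - (m:ℝ) := Tecf_formula hx h0 h1
  have hMfrac : (M:ℝ)/((M:ℝ)+1) < 1 := by rw [div_lt_one hM1]; linarith
  constructor
  · intro hmem
    simp only [ecfAgt, Set.mem_iUnion, Set.mem_Ioo] at hmem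
    obtain ⟨j, hj1, hl, hr⟩ := hmem
    have hjR : (1:ℝ) ≤ (j:ℝ) := by exact_mod_cast hj1
    have hb1 : (0:ℝ) < 2*((j:ℝ)+1)*((M:ℝ)+1)-(M:ℝ) := by nlinarith
    have hb2 : (0:ℝ) < 2*(j:ℝ)*((M:ℝ)+1)+(M:ℝ) := by nlinarith
    rw [← hux] at hl hr
    have P1 : ((M:ℝ)+1)*u < 2*((j:ℝ)+1)*((M:ℝ)+1)-(M:ℝ) := (div_lt_inv_iff' hb1 hu0).1 hl
    have P2 : 2*(j:ℝ)*((M:ℝ)+1)+(M:ℝ) < ((M:ℝ)+1)*u := (inv_lt_div_iff' hb2 hu0).1 hr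
    -- 2j < u < 2j+2, so m ∈ {2j, 2j+1}
    have hu_lb : 2*(j:ℝ) < u := by nlinarith
    have hu_ub : u < 2*(j:ℝ)+2 := by nlinarith
    have hm_lb : 2*(j:ℤ) ≤ m := by
      have : 2*(j:ℝ) < (m:ℝ)+1 := by linarith
      have : (2*(j:ℤ):ℝ) < (m:ℝ)+1 := by push_cast; linarith
      have := (by exact_mod_cast this : 2*(j:ℤ) < m+1)
      omega
    have hm_ub : m ≤ 2*(j:ℤ)+1 := by
      have : (m:ℝ) < 2*(j:ℝ)+2 := by linarith
      have : (m:ℝ) < (2*(j:ℤ)+2 : ℤ) := by push_cast; linarith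
      have := (by exact_mod_cast this : m < 2*(j:ℤ)+2)
      omega
    rcases Int.even_or_odd m with ⟨t, ht⟩ | ⟨t, ht⟩
    · have hodd : ¬ Odd m := Int.not_odd_iff_even.symm.1 ⟨t, ht⟩
      have htj : t = (j:ℤ) := by omega
      have hmR : (m:ℝ) = 2*(j:ℝ) := by rw [ht, htj]; push_cast; ring
      rw [hTf, if_neg hodd, hmR, div_lt_iff₀ hM1]
      nlinarith
    · have hodd : Odd m := ⟨t, ht⟩
      have htj : t = (j:ℤ) := by omega
      have hmR : (m:ℝ) = 2*(j:ℝ)+1 := by rw [ht, htj]; push_cast; ring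
      rw [hTf, if_pos hodd, hmR, div_lt_iff₀ hM1]
      nlinarith
  · intro hlt
    simp only [ecfAgt, Set.mem_iUnion, Set.mem_Ioo]
    rcases Int.even_or_odd m with ⟨t, ht⟩ | ⟨t, ht⟩
    · have hodd : ¬ Odd m := Int.not_odd_iff_even.symm.1 ⟨t, ht⟩
      rw [hTf, if_neg hodd] at hlt
      have ht1 : (1:ℤ) ≤ t := by omega
      have htR : ((t.toNat : ℕ):ℝ) = (t:ℝ) := by exact_mod_cast Int.toNat_of_nonneg (by omega)
      have htR1 : (1:ℝ) ≤ (t:ℝ) := by exact_mod_cast ht1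
      have hmR : (m:ℝ) = 2*(t:ℝ) := by rw [ht]; push_cast; ring
      rw [hmR] at hlt hml hmu
      rw [div_lt_iff₀ hM1] at hlt
      refine ⟨t.toNat, by omega, ?_, ?_⟩
      · push_cast [htR]
        rw [← hux]
        rw [div_lt_inv_iff' (by nlinarith) hu0]
        nlinarith
      · push_cast [htR]
        rw [← hux]
        rw [inv_lt_div_iff' (by nlinarith) hu0]
        nlinarith
    · have hodd : Odd m := ⟨t, ht⟩
      rw [hTf, if_pos hodd] at hlt
      have ht1 : (1:ℤ) ≤ t := by omega
      have htR : ((t.toNat : ℕ):ℝ) = (t:ℝ) := by exact_mod_cast Int.toNat_of_nonneg (by omega)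
      have htR1 : (1:ℝ) ≤ (t:ℝ) := by exact_mod_cast ht1
      have hmR : (m:ℝ) = 2*(t:ℝ)+1 := by rw [ht]; push_cast; ring
      rw [hmR] at hlt hml hmu
      rw [div_lt_iff₀ hM1] at hlt
      refine ⟨t.toNat, by omega, ?_, ?_⟩
      · push_cast [htR]
        rw [← hux]
        rw [div_lt_inv_iff' (by nlinarith) hu0]
        nlinarith
      · push_cast [htR]
        rw [← hux]
        rw [inv_lt_div_iff' (by nlinarith) hu0]
        nlinarith

lemma ecfAn_subset (n : ℕ) : ecfAn (n+1) ⊆ Set.Ioo (0:ℝ) (1/2) := by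
  intro x hx
  simp only [ecfAn, Set.mem_union, Set.mem_iUnion, Set.mem_Ioo] at hx
  rcases hx with ⟨r, hr1, hl, hr⟩ | ⟨r, hr2, hl, hr⟩
  · have hrR : (1:ℝ) ≤ (r:ℝ) := by exact_mod_cast hr1
    have hn0 : (0:ℝ) ≤ (n:ℝ) := Nat.cast_nonneg n
    push_cast at hl hr
    constructor
    · have : (0:ℝ) < ((n:ℝ)+1+1) / (2*(r:ℝ)*((n:ℝ)+1+1)+((n:ℝ)+1)) := by positivity
      linarith
    · have hd : (0:ℝ) < 2*(r:ℝ)*((n:ℝ)+1)+((n:ℝ)+1)-1 := by nlinarith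
      have : ((n:ℝ)+1) / (2*(r:ℝ)*((n:ℝ)+1)+((n:ℝ)+1)-1) ≤ 1/2 := by
        rw [div_le_div_iff₀ hd (by norm_num)]
        nlinarith
      linarith
  · have hrR : (2:ℝ) ≤ (r:ℝ) := by exact_mod_cast hr2
    have hn0 : (0:ℝ) ≤ (n:ℝ) := Nat.cast_nonneg n
    push_cast at hl hr
    constructor
    · have hd : (0:ℝ) < 2*(r:ℝ)*((n:ℝ)+1)-((n:ℝ)+1)+1 := by nlinarith
      have : (0:ℝ) < ((n:ℝ)+1) / (2*(r:ℝ)*((n:ℝ)+1)-((n:ℝ)+1)+1) := by positivity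
      linarith
    · have hd : (0:ℝ) < 2*(r:ℝ)*((n:ℝ)+1+1)-((n:ℝ)+1) := by nlinarith
      have : ((n:ℝ)+1+1) / (2*(r:ℝ)*((n:ℝ)+1+1)-((n:ℝ)+1)) ≤ 1/2 := by
        rw [div_le_div_iff₀ hd (by norm_num)]
        nlinarith
      linarith

lemma ecfAgt_subset (M : ℕ) : ecfAgt M ⊆ Set.Ioo (0:ℝ) (1/2) := by
  intro x hx
  simp only [ecfAgt, Set.mem_iUnion, Set.mem_Ioo] at hx
  obtain ⟨j, hj1, hl, hr⟩ := hx
  have hjR : (1:ℝ) ≤ (j:ℝ) := by exact_mod_cast hj1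
  have hM0 : (0:ℝ) ≤ (M:ℝ) := Nat.cast_nonneg M
  constructor
  · have hd : (0:ℝ) < 2*((j:ℝ)+1)*((M:ℝ)+1)-(M:ℝ) := by nlinarith
    have : (0:ℝ) < ((M:ℝ)+1) / (2*((j:ℝ)+1)*((M:ℝ)+1)-(M:ℝ)) := by positivity
    linarith
  · have hd : (0:ℝ) < 2*(j:ℝ)*((M:ℝ)+1)+(M:ℝ) := by nlinarith
    have : ((M:ℝ)+1) / (2*(j:ℝ)*((M:ℝ)+1)+(M:ℝ)) ≤ 1/2 := by
      rw [div_le_div_iff₀ hd (by norm_num)]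
      nlinarith
    linarith

lemma rat_measure_zero : volume {x : ℝ | ¬ Irrational x} = 0 := by
  have : {x : ℝ | ¬ Irrational x} = Set.range ((↑) : ℚ → ℝ) := by
    ext x; simp [Irrational]
  rw [this]
  exact (Set.countable_range _).measure_zero _

/-- Explicit description (mod 0) of the return-time level sets for `T_ECF`. -/
theorem ecf_return_level_sets :
    (∀ n : ℕ, 1 ≤ n →
      volume ((levelSet Tecf Eecf n \ ecfAn n) ∪ (ecfAn n \ levelSet Tecf Eecf n)) = 0) ∧
    (∀ M : ℕ,
      volume ((superLevelSet Tecf Eecf M \ ecfAgt M) ∪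
        (ecfAgt M \ superLevelSet Tecf Eecf M)) = 0) := by
  constructor
  · intro n hn
    obtain ⟨n', rfl⟩ : ∃ n', n = n' + 1 := ⟨n-1, by omega⟩
    refine measure_mono_null ?_ rat_measure_zero
    intro x hx
    simp only [Set.mem_setOf_eq]
    intro hirr
    have hIoo : x ∈ Set.Ioo (0:ℝ) (1/2) := by
      rcases hx with ⟨h, -⟩ | ⟨h, -⟩
      · obtain ⟨⟨h0, h2⟩, -⟩ := h
        refine ⟨lt_of_le_of_ne h0 ?_, lt_of_le_of_ne h2 ?_⟩
        · intro he; exact hirr (he ▸ ⟨0, by norm_num⟩)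
        · intro he; exact hirr (he ▸ ⟨1/2, by norm_num⟩)
      · exact ecfAn_subset n' h
    have hiff : x ∈ levelSet Tecf Eecf (n'+1) ↔ x ∈ ecfAn (n'+1) :=
      (levelSet_iff hirr hIoo.1 hIoo.2 n').trans (ecfAn_iff hirr hIoo.1 hIoo.2 n').symm
    rcases hx with ⟨h1, h2⟩ | ⟨h1, h2⟩
    · exact h2 (hiff.1 h1)
    · exact h2 (hiff.2 h1)
  · intro M
    refine measure_mono_null ?_ rat_measure_zero
    intro x hx
    simp only [Set.mem_setOf_eq]
    intro hirr
    have hIoo : x ∈ Set.Ioo (0:ℝ) (1/2) := by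
      rcases hx with ⟨h, -⟩ | ⟨h, -⟩
      · obtain ⟨⟨h0, h2⟩, -⟩ := h
        refine ⟨lt_of_le_of_ne h0 ?_, lt_of_le_of_ne h2 ?_⟩
        · intro he; exact hirr (he ▸ ⟨0, by norm_num⟩)
        · intro he; exact hirr (he ▸ ⟨1/2, by norm_num⟩)
      · exact ecfAgt_subset M h
    have hiff : x ∈ superLevelSet Tecf Eecf M ↔ x ∈ ecfAgt M :=
      (superLevelSet_iff hirr hIoo.1 hIoo.2 M).trans (ecfAgt_iff hirr hIoo.1 hIoo.2 M).symm
    rcases hx with ⟨h1, h2⟩ | ⟨h1, h2⟩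
    · exact h2 (hiff.1 h1)
    · exact h2 (hiff.2 h1)


end InfErg

end
end

section
/- Let T be a conservative, ergodic, measure-preserving transformation of a σ-finite measure space (X, ℬ, μ) with μ(X) = ∞, E ∈ ℬ with μ(E) = 1, and g : X → ℝ_{≥0} measurable. Assume (i) ∑_{n≥1} n·(μ(A_{>n}))²/w_n(E)² < ∞, and (ii) μ(g > n) ~ κ·μ(A_{>n}) for some κ > 0, and let β be an asymptotic inverse of α(n) = n/w_n(E). Then ∑_{n≥1} n·μ(g > β(n))² < ∞; moreover, for every ε > 0, ∑_{n≥1} n·μ(g > ε·β(n))² < ∞. -/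
open MeasureTheory Filter Set Asymptotics

noncomputable section

/- ### Auxiliary material for the proof ### -/
open Filter

namespace PureAux

variable (c : ℕ → ℝ)

def W (n : ℕ) : ℝ := ∑ k ∈ Finset.range n, c k

def bA (m : ℕ) : ℝ := (m : ℝ) * c m ^ 2 / (W c m) ^ 2

variable {c}
variable (hpos : ∀ m, 0 ≤ c m) (hanti : ∀ k l, k ≤ l → c l ≤ c k)

section basic
include hpos

lemma W_nonneg (n : ℕ) : 0 ≤ W c n := Finset.sum_nonneg fun k _ => hpos k

lemma W_mono : Monotone (W c) := fun a b hab =>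
  Finset.sum_le_sum_of_subset_of_nonneg (Finset.range_subset_range.mpr hab)
    (fun k _ _ => hpos k)

lemma le_W (h0 : 0 < c 0) {n : ℕ} (hn : 1 ≤ n) : c 0 ≤ W c n :=
  Finset.single_le_sum (fun k _ => hpos k) (Finset.mem_range.mpr hn)

lemma W_pos (h0 : 0 < c 0) {n : ℕ} (hn : 1 ≤ n) : 0 < W c n :=
  lt_of_lt_of_le h0 (le_W hpos h0 hn)

include hanti

lemma mul_le_W (m : ℕ) : (m : ℝ) * c m ≤ W c m := by
  have : ∑ _k ∈ Finset.range m, c m ≤ W c m :=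
    Finset.sum_le_sum fun k hk => hanti k m (Finset.mem_range.mp hk).le
  simpa [mul_comm] using this

omit hpos in
lemma W_le (m : ℕ) : W c m ≤ (m : ℝ) * c 0 := by
  have : W c m ≤ ∑ _k ∈ Finset.range m, c 0 :=
    Finset.sum_le_sum fun k _ => hanti 0 k (Nat.zero_le k)
  simpa [mul_comm] using this

lemma W_double (m : ℕ) : W c (2 * m) ≤ 2 * W c m := by
  have hsplit : W c (2 * m) = W c m + ∑ k ∈ Finset.Ico m (2 * m), c k := by
    rw [W, W, Finset.range_eq_Ico, Finset.range_eq_Ico]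
    exact (Finset.sum_Ico_consecutive c (Nat.zero_le m) (by omega : m ≤ 2 * m)).symm
  have h2 : ∑ k ∈ Finset.Ico m (2 * m), c k ≤ (m : ℝ) * c m := by
    have h := Finset.sum_le_sum (fun k hk => hanti m k (Finset.mem_Ico.mp hk).1 :
      ∀ k ∈ Finset.Ico m (2 * m), c k ≤ c m)
    have hc : ∑ _k ∈ Finset.Ico m (2 * m), c m = (m : ℝ) * c m := by
      rw [Finset.sum_const, Nat.card_Ico]
      have h2m : 2 * m - m = m := by omega
      rw [h2m, nsmul_eq_mul]
    rw [hc] at h; exact h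
  have := mul_le_W hpos hanti m
  rw [hsplit]; linarith

lemma W_pow_double (k m : ℕ) : W c (2 ^ k * m) ≤ 2 ^ k * W c m := by
  induction k with
  | zero => simp
  | succ k ih =>
    have h1 : 2 ^ (k + 1) * m = 2 * (2 ^ k * m) := by ring
    have h2 := W_double hpos hanti (2 ^ k * m)
    calc W c (2 ^ (k + 1) * m) ≤ 2 * W c (2 ^ k * m) := h1 ▸ h2
      _ ≤ 2 * (2 ^ k * W c m) := by nlinarith [ih]
      _ = 2 ^ (k + 1) * W c m := by ring

lemma W_le_pow {k m m' : ℕ} (h : m' ≤ 2 ^ k * m) : W c m' ≤ 2 ^ k * W c m :=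
  (W_mono hpos h).trans (W_pow_double hpos hanti k m)

omit hanti in
lemma bA_nonneg (m : ℕ) : 0 ≤ bA c m := by
  unfold bA; positivity

end basic

set_option maxHeartbeats 1000000 in
/-- The core combinatorial summability lemma. -/
lemma key (hpos : ∀ m, 0 ≤ c m) (hanti : ∀ k l, k ≤ l → c l ≤ c k) (h0 : 0 < c 0)
    (hb : Summable (bA c))
    (mh : ℕ → ℕ) (K1 K2 : ℝ) (hK1 : 1 ≤ K1) (hK2 : 1 ≤ K2)
    (h1 : ∀ᶠ n : ℕ in atTop, (n : ℝ) * W c (mh n) ≤ K1 * (mh n))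
    (h2 : ∀ᶠ n : ℕ in atTop, ((mh n : ℝ)) ≤ K2 * n * W c (mh n))
    (h3 : Tendsto mh atTop atTop) :
    Summable (fun n : ℕ => (n : ℝ) * (c (mh n)) ^ 2) := by
  classical
  set b : ℕ → ℝ := bA c with hbdef
  have hbnn : ∀ m, 0 ≤ b m := bA_nonneg hpos
  set B : ℝ := ∑' m, b m with hBdef
  have hFB : ∀ F : Finset ℕ, ∑ m ∈ F, b m ≤ B :=
    fun F => Summable.sum_le_tsum F (fun i _ => hbnn i) hb
  have hBnn : 0 ≤ B := tsum_nonneg hbnn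
  obtain ⟨N₀, hN₀⟩ := eventually_atTop.mp
    (((h1.and h2).and ((h3.eventually (eventually_ge_atTop 4)).and
      (eventually_ge_atTop 1))))
  -- facts for n ≥ N₀
  have fact1 : ∀ n, N₀ ≤ n → (n : ℝ) * W c (mh n) ≤ K1 * (mh n) := fun n hn => (hN₀ n hn).1.1
  have fact2 : ∀ n, N₀ ≤ n → ((mh n : ℝ)) ≤ K2 * n * W c (mh n) := fun n hn => (hN₀ n hn).1.2
  have fact3 : ∀ n, N₀ ≤ n → 4 ≤ mh n := fun n hn => (hN₀ n hn).2.1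
  have fact4 : ∀ n, N₀ ≤ n → 1 ≤ n := fun n hn => (hN₀ n hn).2.2
  set J : ℕ → Finset ℕ := fun n => Finset.Ico (mh n - mh n / 2) (mh n) with hJdef
  set K' : ℝ := 4 * K1 * K2 + 2 * K2 * c 0 with hK'def
  have hK'nn : 0 ≤ K' := by
    have := h0.le; nlinarith
  -- Step 1
  have step1 : ∀ n, N₀ ≤ n →
      (n : ℝ) * (c (mh n)) ^ 2 ≤ 8 * K1 ^ 2 * ((∑ m ∈ J n, b m) / n) := by
    intro n hn
    have hm4 := fact3 n hn
    have hn1 := fact4 n hn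
    have npos : (0 : ℝ) < n := by exact_mod_cast hn1
    have hWpos : 0 < W c (mh n) := W_pos hpos h0 (by omega)
    have hW2 : (0 : ℝ) < W c (mh n) ^ 2 := by positivity
    -- lower bound for each term of the inner sum
    have hterm : ∀ m ∈ J n,
        ((mh n : ℝ) / 2) * (c (mh n) ^ 2 / W c (mh n) ^ 2) ≤ b m := by
      intro m hm
      rw [hJdef] at hm
      simp only [Finset.mem_Ico] at hm
      have h2m : mh n ≤ 2 * m := by omega
      have hm1 : 1 ≤ m := by omega
      have hmr : (mh n : ℝ) / 2 ≤ (m : ℝ) := by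
        have : (mh n : ℝ) ≤ 2 * m := by exact_mod_cast h2m
        linarith
      have hc : c (mh n) ≤ c m := hanti m (mh n) hm.2.le
      have hWm : 0 < W c m := W_pos hpos h0 hm1
      have hWle : W c m ≤ W c (mh n) := W_mono hpos hm.2.le
      have : ((mh n : ℝ) / 2) * c (mh n) ^ 2 ≤ (m : ℝ) * c m ^ 2 := by
        have hc2 : c (mh n) ^ 2 ≤ c m ^ 2 := by nlinarith [hpos (mh n)]
        nlinarith [hpos (mh n), sq_nonneg (c (mh n))]
      have hWsq : W c m ^ 2 ≤ W c (mh n) ^ 2 := by nlinarith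
      have hnum : 0 ≤ (m : ℝ) * c m ^ 2 := by positivity
      have hden : (0:ℝ) < W c m ^ 2 := by positivity
      rw [hbdef]
      unfold bA
      rw [← mul_div_assoc]
      exact div_le_div₀ hnum this hden hWsq
    have hcard : ((mh n : ℝ)) / 4 ≤ ((J n).card : ℝ) := by
      have : (J n).card = mh n / 2 := by
        rw [hJdef]; simp only [Nat.card_Ico]; omega
      rw [this]
      have h4 : mh n ≤ (mh n / 2) * 4 := by omega
      have := (Nat.cast_le (α := ℝ)).mpr h4
      push_cast at this
      linarith
    have hsum : (mh n : ℝ) ^ 2 * c (mh n) ^ 2 / (8 * W c (mh n) ^ 2)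
        ≤ ∑ m ∈ J n, b m := by
      have hlow := Finset.card_nsmul_le_sum (J n)
        (fun m => b m) (((mh n : ℝ) / 2) * (c (mh n) ^ 2 / W c (mh n) ^ 2)) hterm
      rw [nsmul_eq_mul] at hlow
      refine le_trans ?_ hlow
      rw [div_le_iff₀ (by positivity)]
      have e : ((J n).card : ℝ) * (((mh n : ℝ) / 2) * (c (mh n) ^ 2 / W c (mh n) ^ 2))
            * (8 * W c (mh n) ^ 2)
          = ((J n).card : ℝ) * 4 * ((mh n : ℝ) * c (mh n) ^ 2) := by
        field_simp; ring
      rw [e]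
      nlinarith [sq_nonneg (c (mh n)), Nat.cast_nonneg (α := ℝ) (mh n), hcard,
        mul_le_mul_of_nonneg_right hcard (mul_nonneg (Nat.cast_nonneg (mh n))
          (sq_nonneg (c (mh n))))]
    -- now combine with h1
    have hnW : (n : ℝ) ^ 2 * W c (mh n) ^ 2 ≤ K1 ^ 2 * (mh n : ℝ) ^ 2 := by
      have := fact1 n hn
      nlinarith [mul_nonneg npos.le hWpos.le]
    rw [mul_div_assoc', le_div_iff₀ npos]
    calc (n : ℝ) * c (mh n) ^ 2 * n = (n : ℝ) ^ 2 * c (mh n) ^ 2 := by ring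
      _ ≤ K1 ^ 2 * (mh n : ℝ) ^ 2 * c (mh n) ^ 2 / W c (mh n) ^ 2 := by
          rw [le_div_iff₀ hW2]; nlinarith [sq_nonneg (c (mh n))]
      _ = 8 * K1 ^ 2 * ((mh n : ℝ) ^ 2 * c (mh n) ^ 2 / (8 * W c (mh n) ^ 2)) := by
          field_simp
      _ ≤ 8 * K1 ^ 2 * ∑ m ∈ J n, b m := by
          have h8 : (0:ℝ) ≤ 8 * K1 ^ 2 := by positivity
          exact mul_le_mul_of_nonneg_left hsum h8
  -- Step 2 : double counting
  have step2 : ∀ N' : ℕ, ∑ n ∈ Finset.Ico N₀ N', (∑ m ∈ J n, b m) / n ≤ K' * B := by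
    intro N'
    set A := Finset.Ico N₀ N' with hAdef
    set M : ℕ := A.sup mh with hMdef
    have hJsub : ∀ n ∈ A, J n ⊆ Finset.range (M + 1) := by
      intro n hnA m hm
      rw [hJdef] at hm
      simp only [Finset.mem_Ico] at hm
      have : mh n ≤ M := Finset.le_sup hnA
      exact Finset.mem_range.mpr (by omega)
    have hrw : ∀ n ∈ A, (∑ m ∈ J n, b m) / n
        = ∑ m ∈ Finset.range (M + 1), (if m ∈ J n then b m / n else 0) := by
      intro n hnA
      rw [Finset.sum_ite_mem, Finset.inter_eq_right.mpr (hJsub n hnA), Finset.sum_div]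
    rw [Finset.sum_congr rfl hrw, Finset.sum_comm]
    have hperm : ∀ m ∈ Finset.range (M + 1),
        ∑ n ∈ A, (if m ∈ J n then b m / n else 0) ≤ K' * b m := by
      intro m _
      rw [← Finset.sum_filter]
      set S := A.filter (fun n => m ∈ J n) with hSdef
      rcases S.eq_empty_or_nonempty with hS | ⟨n₀, hn₀⟩
      · rw [hS, Finset.sum_empty]; exact mul_nonneg hK'nn (hbnn m)
      · -- facts about m from n₀
        have hmem : ∀ n ∈ S, n ∈ A ∧ m ∈ J n := by
          intro n hn; rw [hSdef] at hn; exact Finset.mem_filter.mp hn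
        obtain ⟨hn₀A, hn₀J⟩ := hmem n₀ hn₀
        have hn₀0 : N₀ ≤ n₀ := (Finset.mem_Ico.mp hn₀A).1
        have hmJ : mh n₀ - mh n₀ / 2 ≤ m ∧ m < mh n₀ := by
          have := hn₀J; rw [hJdef] at this; simpa using Finset.mem_Ico.mp this
        have hm4 : 4 ≤ mh n₀ := fact3 n₀ hn₀0
        have hm1 : 1 ≤ m := by omega
        have hmpos : (0:ℝ) < m := by exact_mod_cast hm1
        have hWm : 0 < W c m := W_pos hpos h0 hm1
        -- each n ∈ S gives the same kind of bounds
        have hbnds : ∀ n ∈ S, (n : ℝ) ≤ 2 * K1 * m / W c m ∧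
            (1 : ℝ) / n ≤ 2 * K2 * W c m / m := by
          intro n hnS
          obtain ⟨hnA, hnJ⟩ := hmem n hnS
          have hnN₀ : N₀ ≤ n := (Finset.mem_Ico.mp hnA).1
          have hmJn : mh n - mh n / 2 ≤ m ∧ m < mh n := by
            have := hnJ; rw [hJdef] at this; simpa using Finset.mem_Ico.mp this
          have h2m : mh n ≤ 2 * m := by omega
          have hmlt : m ≤ mh n := hmJn.2.le
          have npos : (0:ℝ) < n := by exact_mod_cast (fact4 n hnN₀)
          have hW1 : W c m ≤ W c (mh n) := W_mono hpos hmlt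
          have hW2' : W c (mh n) ≤ 2 * W c m := by
            have := W_le_pow hpos hanti (k := 1) (m := m) (m' := mh n) (by simpa using h2m)
            simpa using this
          have hWmh : 0 < W c (mh n) := lt_of_lt_of_le hWm hW1
          constructor
          · -- from fact1
            have hf1 := fact1 n hnN₀
            rw [le_div_iff₀ hWm]
            have hcast : (mh n : ℝ) ≤ 2 * m := by exact_mod_cast h2m
            calc (n : ℝ) * W c m ≤ (n : ℝ) * W c (mh n) :=
                  mul_le_mul_of_nonneg_left hW1 npos.le
              _ ≤ K1 * mh n := hf1
              _ ≤ K1 * (2 * m) := by nlinarith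
              _ = 2 * K1 * m := by ring
          · -- from fact2
            have hf2 := fact2 n hnN₀
            rw [div_le_div_iff₀ npos hmpos]
            have hcast : (m : ℝ) ≤ (mh n : ℝ) := by exact_mod_cast hmlt
            calc (1 : ℝ) * m = (m : ℝ) := by ring
              _ ≤ (mh n : ℝ) := hcast
              _ ≤ K2 * n * W c (mh n) := hf2
              _ ≤ K2 * n * (2 * W c m) := by
                  have : (0:ℝ) ≤ K2 * n := by positivity
                  nlinarith
              _ = 2 * K2 * W c m * n := by ring
        -- card bound
        have hU : (0:ℝ) ≤ 2 * K1 * m / W c m := by positivity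
        have hcardS : (S.card : ℝ) ≤ 2 * K1 * m / W c m + 1 := by
          have hsub : S ⊆ Finset.range (⌊2 * K1 * m / W c m⌋₊ + 1) := by
            intro n hnS
            have := (hbnds n hnS).1
            exact Finset.mem_range.mpr (Nat.lt_succ_of_le (Nat.le_floor this))
          have := Finset.card_le_card hsub
          rw [Finset.card_range] at this
          have h2 : ((⌊2 * K1 * m / W c m⌋₊ + 1 : ℕ) : ℝ) ≤ 2 * K1 * m / W c m + 1 := by
            push_cast
            have := Nat.floor_le hU
            linarith
          calc (S.card : ℝ) ≤ ((⌊2 * K1 * m / W c m⌋₊ + 1 : ℕ) : ℝ) := by exact_mod_cast this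
            _ ≤ _ := h2
        -- sum over S
        have hsumS : ∑ n ∈ S, b m / n ≤ (S.card : ℝ) * (b m * (2 * K2 * W c m / m)) := by
          have := Finset.sum_le_card_nsmul S (fun n => b m / n)
            (b m * (2 * K2 * W c m / m)) (by
              intro n hnS
              have h1n := (hbnds n hnS).2
              show b m / (n:ℝ) ≤ _
              rw [div_eq_mul_one_div]
              exact mul_le_mul_of_nonneg_left h1n (hbnn m))
          rw [nsmul_eq_mul] at this
          exact this
        refine hsumS.trans ?_
        have hWlec : W c m / m ≤ c 0 := by
          rw [div_le_iff₀ hmpos]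
          have := W_le hanti m
          linarith [this]
        have hfin : (S.card : ℝ) * (b m * (2 * K2 * W c m / m)) ≤ K' * b m := by
          have e1 : (S.card : ℝ) * (b m * (2 * K2 * W c m / m))
              = (S.card : ℝ) * (2 * K2 * (W c m / m)) * b m := by ring
          rw [e1, hK'def]
          apply mul_le_mul_of_nonneg_right _ (hbnn m)
          calc (S.card : ℝ) * (2 * K2 * (W c m / m))
              ≤ (2 * K1 * m / W c m + 1) * (2 * K2 * (W c m / m)) := by
                apply mul_le_mul_of_nonneg_right hcardS
                positivity
            _ = 4 * K1 * K2 + 2 * K2 * (W c m / m) := by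
                field_simp; ring
            _ ≤ 4 * K1 * K2 + 2 * K2 * c 0 := by
                have : (0:ℝ) ≤ 2 * K2 := by linarith
                nlinarith
        exact hfin
    calc ∑ m ∈ Finset.range (M + 1), ∑ n ∈ A, (if m ∈ J n then b m / n else 0)
        ≤ ∑ m ∈ Finset.range (M + 1), K' * b m := Finset.sum_le_sum hperm
      _ = K' * ∑ m ∈ Finset.range (M + 1), b m := by rw [Finset.mul_sum]
      _ ≤ K' * B := mul_le_mul_of_nonneg_left (hFB _) hK'nn
  -- Assemble
  set H : ℝ := ∑ n ∈ Finset.range N₀, (n : ℝ) * (c (mh n)) ^ 2 with hHdef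
  apply summable_of_sum_range_le (c := H + 8 * K1 ^ 2 * (K' * B))
    (fun n => by positivity)
  intro N
  have hsub : ∑ n ∈ Finset.range N, (n : ℝ) * (c (mh n)) ^ 2
      ≤ ∑ n ∈ Finset.range (max N N₀), (n : ℝ) * (c (mh n)) ^ 2 :=
    Finset.sum_le_sum_of_subset_of_nonneg
      (Finset.range_subset_range.mpr (le_max_left _ _)) (fun k _ _ => by positivity)
  refine hsub.trans ?_
  have hsplit : ∑ n ∈ Finset.range (max N N₀), (n : ℝ) * (c (mh n)) ^ 2
      = H + ∑ n ∈ Finset.Ico N₀ (max N N₀), (n : ℝ) * (c (mh n)) ^ 2 := by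
    rw [hHdef, Finset.range_eq_Ico, Finset.range_eq_Ico]
    exact (Finset.sum_Ico_consecutive _ (Nat.zero_le N₀) (le_max_right _ _)).symm
  rw [hsplit]
  have htail : ∑ n ∈ Finset.Ico N₀ (max N N₀), (n : ℝ) * (c (mh n)) ^ 2
      ≤ 8 * K1 ^ 2 * (K' * B) := by
    calc ∑ n ∈ Finset.Ico N₀ (max N N₀), (n : ℝ) * (c (mh n)) ^ 2
        ≤ ∑ n ∈ Finset.Ico N₀ (max N N₀), 8 * K1 ^ 2 * ((∑ m ∈ J n, b m) / n) := by
          apply Finset.sum_le_sum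
          intro n hn
          exact step1 n (Finset.mem_Ico.mp hn).1
      _ = 8 * K1 ^ 2 * ∑ n ∈ Finset.Ico N₀ (max N N₀), (∑ m ∈ J n, b m) / n := by
          rw [Finset.mul_sum]
      _ ≤ 8 * K1 ^ 2 * (K' * B) := by
          apply mul_le_mul_of_nonneg_left (step2 _) (by positivity)
  linarith

lemma summable_of_eventually_le' {u v : ℕ → ℝ} (h0 : ∀ n, 0 ≤ u n)
    (h : ∀ᶠ n in atTop, u n ≤ v n) (hv : Summable v) : Summable u := by
  obtain ⟨N, hN⟩ := eventually_atTop.mp h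
  rw [← summable_nat_add_iff N]
  exact Summable.of_nonneg_of_le (fun n => h0 _) (fun n => hN _ (Nat.le_add_left N n))
    ((summable_nat_add_iff N).mpr hv)

open MeasureTheory in
/-- The measure-theoretic gluing lemma. -/
lemma glue (c : ℕ → ℝ) (hpos : ∀ m, 0 ≤ c m) (hanti : ∀ k l, k ≤ l → c l ≤ c k)
    (hb : Summable (bA c))
    (β : ℕ → ℝ)
    (hA : Filter.Tendsto (fun n : ℕ => ((⌊β n⌋₊ : ℝ) / W c ⌊β n⌋₊) / (n : ℝ))
      atTop (nhds 1))
    (G : ℝ → ENNReal) (hG : ∀ r s : ℝ, r ≤ s → G s ≤ G r)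
    (κ : ℝ) (hκ : 0 < κ)
    (hii : Asymptotics.IsEquivalent atTop (fun n : ℕ => (G (n : ℝ)).toReal)
      (fun n : ℕ => κ * c n))
    (ε : ℝ) (hε : 0 < ε) :
    Summable (fun n : ℕ => (n : ℝ) * ((G (ε * β n)).toReal) ^ 2) := by
  classical
  -- first, `c 0 > 0`
  have h0 : 0 < c 0 := by
    by_contra hc0
    push_neg at hc0
    have hc00 : c 0 = 0 := le_antisymm hc0 (hpos 0)
    have hW0 : ∀ n, W c n = 0 := by
      intro n
      refine Finset.sum_eq_zero fun k _ =>
        le_antisymm ((hanti 0 k (Nat.zero_le k)).trans (le_of_eq hc00)) (hpos k)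
    have hzero : (fun n : ℕ => ((⌊β n⌋₊ : ℝ) / W c ⌊β n⌋₊) / (n : ℝ))
        = fun _ => (0 : ℝ) := by
      funext n
      rw [hW0, div_zero, zero_div]
    rw [hzero] at hA
    exact one_ne_zero (tendsto_nhds_unique tendsto_const_nhds hA).symm
  set mβ : ℕ → ℕ := fun n => ⌊β n⌋₊ with hmβdef
  have evA1 : ∀ᶠ n : ℕ in atTop,
      (1 : ℝ) / 2 < ((mβ n : ℝ) / W c (mβ n)) / (n : ℝ) :=
    hA.eventually (eventually_gt_nhds (by norm_num))
  have evA2 : ∀ᶠ n : ℕ in atTop,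
      ((mβ n : ℝ) / W c (mβ n)) / (n : ℝ) < 2 :=
    hA.eventually (eventually_lt_nhds (by norm_num))
  have evB : ∀ᶠ n : ℕ in atTop, 1 ≤ n ∧ 1 ≤ mβ n ∧
      (n : ℝ) / 2 * W c (mβ n) < (mβ n : ℝ) ∧
      (mβ n : ℝ) < 2 * n * W c (mβ n) := by
    filter_upwards [evA1, evA2, eventually_ge_atTop 1] with n h1 h2 hn1
    have npos : (0 : ℝ) < n := by exact_mod_cast hn1
    have hm1 : 1 ≤ mβ n := by
      by_contra hm
      push_neg at hm
      have h00 : mβ n = 0 := by omega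
      rw [h00] at h1
      simp only [Nat.cast_zero, zero_div] at h1
      linarith
    have wpos : 0 < W c (mβ n) := W_pos hpos h0 hm1
    have e1 : (1 : ℝ) / 2 * n < (mβ n : ℝ) / W c (mβ n) := (lt_div_iff₀ npos).mp h1
    have e1' : (1 : ℝ) / 2 * n * W c (mβ n) < mβ n := (lt_div_iff₀ wpos).mp e1
    have e2 : (mβ n : ℝ) / W c (mβ n) < 2 * n := (div_lt_iff₀ npos).mp h2
    have e2' : (mβ n : ℝ) < 2 * n * W c (mβ n) := (div_lt_iff₀ wpos).mp e2
    exact ⟨hn1, hm1, by linarith, e2'⟩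
  have evβ1 : ∀ᶠ n : ℕ in atTop, (1 : ℝ) ≤ β n := by
    filter_upwards [evB] with n hn
    by_contra hlt
    push_neg at hlt
    have : mβ n = 0 := Nat.floor_eq_zero.mpr hlt
    omega
  have evmβge : ∀ᶠ n : ℕ in atTop, c 0 / 2 * (n : ℝ) ≤ (mβ n : ℝ) := by
    filter_upwards [evB] with n hn
    have wge : c 0 ≤ W c (mβ n) := le_W hpos h0 hn.2.1
    have := hn.2.2.1
    have hn0 : (0 : ℝ) ≤ n := Nat.cast_nonneg n
    nlinarith
  have hTmβR : Filter.Tendsto (fun n : ℕ => (mβ n : ℝ)) atTop atTop :=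
    tendsto_atTop_mono' atTop evmβge
      (tendsto_natCast_atTop_atTop.const_mul_atTop (by positivity))
  -- case distinction on whether all the tails are infinite
  by_cases hfin : ∀ M : ℕ, G (M : ℝ) = ⊤
  · have hz : ∀ n : ℕ, G (ε * β n) = ⊤ := by
      intro n
      refine top_le_iff.mp ?_
      rw [← hfin ⌈ε * β n⌉₊]
      exact hG _ _ (Nat.le_ceil _)
    have hzz : (fun n : ℕ => (n : ℝ) * ((G (ε * β n)).toReal) ^ 2)
        = fun _ => (0 : ℝ) := by
      funext n; rw [hz n]; simp
    rw [hzz]; exact summable_zero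
  · push_neg at hfin
    obtain ⟨M₀, hM₀⟩ := hfin
    set ε₁ : ℝ := min ε 1 with hε₁def
    have hε₁pos : 0 < ε₁ := lt_min hε one_pos
    have hε₁le1 : ε₁ ≤ 1 := min_le_right _ _
    have hε₁leε : ε₁ ≤ ε := min_le_left _ _
    set mh : ℕ → ℕ := fun n => ⌊ε₁ * β n⌋₊ with hmhdef
    have evε : ∀ᶠ n : ℕ in atTop,
        ε₁ / 2 * (mβ n : ℝ) ≤ (mh n : ℝ) ∧ mh n ≤ mβ n := by
      filter_upwards [evβ1, hTmβR.eventually_ge_atTop (2 / ε₁)] with n hb1 hmge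
      have hβ0 : (0 : ℝ) ≤ β n := by linarith
      constructor
      · have hfl : ε₁ * β n < (mh n : ℝ) + 1 := Nat.lt_floor_add_one _
        have hble : (mβ n : ℝ) ≤ β n := Nat.floor_le hβ0
        have h1 : ε₁ * (mβ n : ℝ) ≤ ε₁ * β n :=
          mul_le_mul_of_nonneg_left hble hε₁pos.le
        have h2 : (1 : ℝ) ≤ ε₁ / 2 * (mβ n : ℝ) := by
          have := mul_le_mul_of_nonneg_left hmge (by positivity : (0:ℝ) ≤ ε₁ / 2)
          have heq : ε₁ / 2 * (2 / ε₁) = 1 := by field_simp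
          linarith
        linarith
      · refine Nat.floor_mono ?_
        nlinarith
    have hTmhR : Filter.Tendsto (fun n : ℕ => (mh n : ℝ)) atTop atTop := by
      refine tendsto_atTop_mono' atTop (evε.mono fun n h => h.1) ?_
      exact hTmβR.const_mul_atTop (by positivity)
    have hTmh : Filter.Tendsto mh atTop atTop :=
      tendsto_natCast_atTop_iff.mp hTmhR
    have hK1 : (1 : ℝ) ≤ 4 / ε₁ := by
      rw [le_div_iff₀ hε₁pos]; linarith
    obtain ⟨k, hk⟩ := pow_unbounded_of_one_lt (2 / ε₁) (one_lt_two (α := ℝ))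
    have hK2 : (1 : ℝ) ≤ 2 ^ (k + 1) := one_le_pow₀ one_le_two
    have h1ev : ∀ᶠ n : ℕ in atTop,
        (n : ℝ) * W c (mh n) ≤ 4 / ε₁ * (mh n : ℝ) := by
      filter_upwards [evB, evε] with n hB hev
      have hWle : W c (mh n) ≤ W c (mβ n) := W_mono hpos hev.2
      have h1 : (n : ℝ) / 2 * W c (mβ n) < mβ n := hB.2.2.1
      have h2 : ε₁ / 2 * (mβ n : ℝ) ≤ mh n := hev.1
      have hn0 : (0 : ℝ) ≤ n := Nat.cast_nonneg n
      have e1 : (n : ℝ) * W c (mh n) ≤ n * W c (mβ n) :=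
        mul_le_mul_of_nonneg_left hWle hn0
      have e3 : 2 * (mβ n : ℝ) ≤ 4 / ε₁ * (mh n : ℝ) := by
        have h4 := mul_le_mul_of_nonneg_left h2 (by positivity : (0:ℝ) ≤ 4 / ε₁)
        have heq : 4 / ε₁ * (ε₁ / 2 * (mβ n : ℝ)) = 2 * mβ n := by
          field_simp; ring
        linarith
      linarith
    have h2ev : ∀ᶠ n : ℕ in atTop,
        (mh n : ℝ) ≤ 2 ^ (k + 1) * (n : ℝ) * W c (mh n) := by
      filter_upwards [evB, evε] with n hB hev
      have h2 : ε₁ / 2 * (mβ n : ℝ) ≤ mh n := hev.1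
      have e1 : (mβ n : ℝ) ≤ 2 / ε₁ * (mh n : ℝ) := by
        have h4 := mul_le_mul_of_nonneg_left h2 (by positivity : (0:ℝ) ≤ 2 / ε₁)
        have heq : 2 / ε₁ * (ε₁ / 2 * (mβ n : ℝ)) = (mβ n : ℝ) := by
          field_simp
        linarith
      have e2 : (2 : ℝ) / ε₁ * (mh n : ℝ) ≤ 2 ^ k * (mh n : ℝ) :=
        mul_le_mul_of_nonneg_right hk.le (Nat.cast_nonneg _)
      have hnat : mβ n ≤ 2 ^ k * mh n := by
        have hr' : ((mβ n : ℕ) : ℝ) ≤ ((2 ^ k * mh n : ℕ) : ℝ) := by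
          push_cast
          linarith
        exact_mod_cast hr'
      have hWp : W c (mβ n) ≤ 2 ^ k * W c (mh n) := W_le_pow hpos hanti hnat
      have hB2 : (mβ n : ℝ) < 2 * n * W c (mβ n) := hB.2.2.2
      have hmle : (mh n : ℝ) ≤ (mβ n : ℝ) := by exact_mod_cast hev.2
      have hn0 : (0 : ℝ) ≤ 2 * (n:ℝ) := by positivity
      have e4 : 2 * (n:ℝ) * W c (mβ n) ≤ 2 * n * (2 ^ k * W c (mh n)) :=
        mul_le_mul_of_nonneg_left hWp hn0
      have heq2 : 2 * (n:ℝ) * (2 ^ k * W c (mh n)) = 2 ^ (k + 1) * n * W c (mh n) := by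
        ring
      linarith
    have hkey : Summable (fun n : ℕ => (n : ℝ) * (c (mh n)) ^ 2) :=
      key hpos hanti h0 hb mh (4 / ε₁) (2 ^ (k + 1)) hK1 hK2 h1ev h2ev hTmh
    have h2κ : ∀ᶠ m : ℕ in atTop, (G (m : ℝ)).toReal ≤ 2 * κ * c m := by
      have hlo := hii.isLittleO
      filter_upwards [hlo.def one_pos] with m hm
      have hg0' : 0 ≤ κ * c m := mul_nonneg hκ.le (hpos m)
      simp only [Pi.sub_apply, Real.norm_eq_abs, one_mul] at hm
      rw [abs_of_nonneg hg0'] at hm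
      have := abs_le.mp hm
      linarith [this.2]
    have hdom : ∀ᶠ n : ℕ in atTop,
        (n : ℝ) * ((G (ε * β n)).toReal) ^ 2
          ≤ (2 * κ) ^ 2 * ((n : ℝ) * (c (mh n)) ^ 2) := by
      filter_upwards [evβ1, hTmh.eventually_ge_atTop M₀, hTmh.eventually h2κ]
        with n hb1 hM hf
      have hβ0 : (0 : ℝ) ≤ β n := by linarith
      have hfl : ((mh n : ℕ) : ℝ) ≤ ε₁ * β n := Nat.floor_le (by positivity)
      have hεε : ε₁ * β n ≤ ε * β n := mul_le_mul_of_nonneg_right hε₁leε hβ0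
      have t1 : (G (ε * β n)).toReal ≤ (G ((mh n : ℕ) : ℝ)).toReal := by
        have hfin2 : G ((mh n : ℕ) : ℝ) ≠ ⊤ := by
          refine ne_top_of_le_ne_top hM₀ (hG _ _ ?_)
          exact_mod_cast hM
        exact ENNReal.toReal_mono hfin2 (hG _ _ (hfl.trans hεε))
      have t2 : (G ((mh n : ℕ) : ℝ)).toReal ≤ 2 * κ * c (mh n) := hf
      have t0 : (0 : ℝ) ≤ (G (ε * β n)).toReal := ENNReal.toReal_nonneg
      have tn : (0 : ℝ) ≤ n := Nat.cast_nonneg n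
      have t3 : (G (ε * β n)).toReal ≤ 2 * κ * c (mh n) := t1.trans t2
      have hsq : ((G (ε * β n)).toReal) ^ 2 ≤ (2 * κ * c (mh n)) ^ 2 := by
        nlinarith
      calc (n : ℝ) * ((G (ε * β n)).toReal) ^ 2
          ≤ (n : ℝ) * (2 * κ * c (mh n)) ^ 2 := mul_le_mul_of_nonneg_left hsq tn
        _ = (2 * κ) ^ 2 * ((n : ℝ) * (c (mh n)) ^ 2) := by ring
    exact summable_of_eventually_le' (fun n => by positivity) hdom
      (hkey.mul_left _)

end PureAux


namespace InfErg

variable {X : Type*} [MeasurableSpace X]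

/-- Equation (4.6) (eq: sum with C) and its strengthening: summability of
`n · μ(g > ε β(n))²` under conditions (i) and (ii). -/
theorem sum_g_beta_sq
    {X : Type*} [MeasurableSpace X] (μ : Measure X) [SigmaFinite μ]
    (T : X → X) (hcons : Conservative T μ) (herg : Ergodic T μ)
    (hXinf : μ Set.univ = ⊤)
    (E : Set X) (hEmeas : MeasurableSet E) (hE1 : μ E = 1)
    (g : X → ℝ) (hgmeas : Measurable g) (hg0 : ∀ x, 0 ≤ g x)
    -- (i)
    (hi : Summable (fun n : ℕ =>
      (n : ℝ) * ((μ (superLevelSet T E n)).toReal) ^ 2 / (wanderingRate T E μ n) ^ 2))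
    -- (ii)
    (κ : ℝ) (hκ : 0 < κ)
    (hii : (fun n : ℕ => (μ {x | (n : ℝ) < g x}).toReal) ~[atTop]
      (fun n : ℕ => κ * (μ (superLevelSet T E n)).toReal))
    -- β is the asymptotic inverse of α
    (β : ℕ → ℝ) (hβ : IsAsymptoticInverseSeq (alphaSeq T E μ) β) :
    Summable (fun n : ℕ => (n : ℝ) * ((μ {x | β n < g x}).toReal) ^ 2) ∧
    ∀ ε : ℝ, 0 < ε →
      Summable (fun n : ℕ => (n : ℝ) * ((μ {x | ε * β n < g x}).toReal) ^ 2) := by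
  have hGanti : ∀ r s : ℝ, r ≤ s → μ {x | s < g x} ≤ μ {x | r < g x} :=
    fun r s hrs => measure_mono fun x hx => lt_of_le_of_lt hrs hx
  have hpos : ∀ m : ℕ, 0 ≤ (μ (superLevelSet T E m)).toReal :=
    fun m => ENNReal.toReal_nonneg
  have hfinlev : ∀ m : ℕ, μ (superLevelSet T E m) ≠ ⊤ := by
    intro m
    refine ne_top_of_le_ne_top ?_ (measure_mono (fun x hx => hx.1))
    rw [hE1]; exact ENNReal.one_ne_top
  have hanti : ∀ k l : ℕ, k ≤ l →
      (μ (superLevelSet T E l)).toReal ≤ (μ (superLevelSet T E k)).toReal := by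
    intro k l hkl
    refine ENNReal.toReal_mono (hfinlev k) (measure_mono ?_)
    intro x hx
    exact ⟨hx.1, lt_of_le_of_lt hkl hx.2⟩
  have hmain : ∀ ε : ℝ, 0 < ε →
      Summable (fun n : ℕ => (n : ℝ) * ((μ {x | ε * β n < g x}).toReal) ^ 2) := by
    intro ε hε
    exact PureAux.glue (fun m => (μ (superLevelSet T E m)).toReal) hpos hanti hi β hβ.1
      (fun r => μ {x | r < g x}) hGanti κ hκ hii ε hε
  refine ⟨?_, hmain⟩
  have h1 := hmain 1 one_pos
  simpa using h1


end InfErg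

end
end
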